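/- Let q ≥ 0 and let θ₀(h) ∈ ℝ^{q+1}, h ∈ (0,h₀], be a family of unit vectors (‖θ₀(h)‖ = 1 for all h) admitting a classical expansion θ₀(h) ∼ Σ_{k≥0} h^k θ₀^{(k)}. Then there exist h₁ ∈ (0,h₀] and families θ₁(h),…,θ_q(h) ∈ ℝ^{q+1}, h ∈ (0,h₁], each admitting a classical expansion θ_j(h) ∼ Σ_{k≥0} h^k θ_j^{(k)}, such that: (i) for every h ∈ (0,h₁] the family (θ₀(h), θ₁(h), …, θ_q(h)) is an orthonormal basis of ℝ^{q+1}; (ii) for every 1 ≤ j ≤ q the leading term θ_j^{(0)} is orthogonal to the leading term θ₀^{(0)}. -/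

import Mathlib

/-!
Write `v₀ = θ₀⁽⁰⁾`; it is a unit vector, so it is the first vector of an orthonormal basis
`v₀, b₁, …, b_q`. For each `h`, the reflection `S_h` in the hyperplane orthogonal to
`w(h) = v₀ + θ₀(h)` maps `v₀` to `-θ₀(h)`, so `θ₀(h), S_h b₁, …, S_h b_q` is again an orthonormal
basis. Explicitly `S_h x = x - (2 ⟪x, w⟫ / ⟪w, w⟫) • w`, and classical expansions are stable under
sums, bounded bilinear maps (Cauchy product of coefficients) and inversion of a function bounded
away from zero (inverse power series); since `‖w(h)‖ ≥ 1` for small `h`, each `θⱼ = S_h bⱼ` has a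
classical expansion. Its leading term is the reflection of `bⱼ` in `(2 v₀)ᗮ`, that is `bⱼ ⊥ v₀`.
-/

open scoped RealInnerProductSpace

noncomputable section

open Filter Asymptotics Finset Topology

variable {E F G : Type*} [NormedAddCommGroup E] [NormedSpace ℝ E]
  [NormedAddCommGroup F] [NormedSpace ℝ F] [NormedAddCommGroup G] [NormedSpace ℝ G]

def expansionSum (a : ℕ → F) (N : ℕ) (h : ℝ) : F :=
  ∑ k ∈ range (N + 1), h ^ k • a k

/-- Along `𝓟 (Set.Ioc 0 h₁)` this is a classical expansion on `(0, h₁]`, with constants uniform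
in `h`. -/
def HasClassicalExpansion (l : Filter ℝ) (f : ℝ → F) (a : ℕ → F) : Prop :=
  ∀ N, (fun h => f h - expansionSum a N h) =O[l] fun h => h ^ (N + 1)

def cauchyProduct (L : E →L[ℝ] F →L[ℝ] G) (a : ℕ → E) (b : ℕ → F) (n : ℕ) : G :=
  ∑ k ∈ range (n + 1), L (a k) (b (n - k))

@[simp]
theorem expansionSum_zero (a : ℕ → F) (h : ℝ) : expansionSum a 0 h = a 0 := by
  simp [expansionSum]

@[simp]
theorem expansionSum_single_zero (c : F) (N : ℕ) (h : ℝ) :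
    expansionSum (Pi.single 0 c) N h = c := by
  simp [expansionSum, Pi.single_apply]

theorem expansionSum_cauchyProduct (L : E →L[ℝ] F →L[ℝ] G) (a : ℕ → E) (b : ℕ → F)
    (N : ℕ) (h : ℝ) :
    expansionSum (cauchyProduct L a b) N h =
      ∑ k ∈ range (N + 1), h ^ k • L (a k) (expansionSum b (N - k) h) := by
  simp only [expansionSum, cauchyProduct, smul_sum, map_sum, map_smul]
  calc ∑ n ∈ range (N + 1), ∑ k ∈ range (n + 1), h ^ n • L (a k) (b (n - k))
      = ∑ n ∈ range (N + 1), ∑ k ∈ range (n + 1),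
          h ^ k • h ^ (n - k) • L (a k) (b (n - k)) := by
        refine sum_congr rfl fun n _ => sum_congr rfl fun k hk => ?_
        rw [smul_smul, ← pow_add, Nat.add_sub_cancel' (Nat.lt_succ_iff.1 (mem_range.1 hk))]
    _ = ∑ k ∈ range (N + 1), ∑ m ∈ range (N + 1 - k), h ^ k • h ^ m • L (a k) (b m) :=
        sum_range_diag_flip (N + 1) fun k m => h ^ k • h ^ m • L (a k) (b m)
    _ = _ := by
        refine sum_congr rfl fun k hk => ?_
        rw [Nat.sub_add_comm (Nat.lt_succ_iff.1 (mem_range.1 hk))]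

theorem isBigO_pow_pow_of_le {l : Filter ℝ} (hl : (fun h : ℝ => h) =O[l] fun _ => (1 : ℝ))
    {m n : ℕ} (hmn : m ≤ n) : (fun h : ℝ => h ^ n) =O[l] fun h => h ^ m := by
  simpa [← pow_add, Nat.add_sub_cancel' hmn] using
    (isBigO_refl (fun h : ℝ => h ^ m) l).mul (hl.pow (n - m))

theorem ContinuousLinearMap.isBigO_comp₂ {α : Type*} {l : Filter α}
    (L : E →L[ℝ] F →L[ℝ] G) {f : α → E} {g : α → F} {φ ψ : α → ℝ}
    (hf : f =O[l] φ) (hg : g =O[l] ψ) :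
    (fun x => L (f x) (g x)) =O[l] fun x => φ x * ψ x :=
  L.isBoundedBilinearMap.isBigO_comp.trans (hf.norm_left.mul hg.norm_left)

namespace HasClassicalExpansion

variable {l l' : Filter ℝ} {f g : ℝ → F} {a b : ℕ → F}

theorem mono (hf : HasClassicalExpansion l f a) (hl : l' ≤ l) :
    HasClassicalExpansion l' f a :=
  fun N => (hf N).mono hl

theorem const (c : F) : HasClassicalExpansion l (fun _ => c) (Pi.single 0 c) :=
  fun N => by simpa using isBigO_zero (fun h : ℝ => h ^ (N + 1)) l

theorem add (hf : HasClassicalExpansion l f a) (hg : HasClassicalExpansion l g b) :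
    HasClassicalExpansion l (fun h => f h + g h) (fun n => a n + b n) := fun N =>
  ((hf N).add (hg N)).congr_left fun h => by
    simp only [expansionSum, smul_add, sum_add_distrib]; abel

theorem sub (hf : HasClassicalExpansion l f a) (hg : HasClassicalExpansion l g b) :
    HasClassicalExpansion l (fun h => f h - g h) (fun n => a n - b n) := fun N =>
  ((hf N).sub (hg N)).congr_left fun h => by
    simp only [expansionSum, smul_sub, sum_sub_distrib]; abel

theorem map (hf : HasClassicalExpansion l f a) (T : F →L[ℝ] G) :
    HasClassicalExpansion l (fun h => T (f h)) (fun n => T (a n)) := fun N =>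
  (T.isBigO_comp _ l |>.trans (hf N)).congr_left fun h => by
    simp [expansionSum, map_sub, map_sum, map_smul]

theorem tendsto (hf : HasClassicalExpansion l f a) (hl : Tendsto (fun h : ℝ => h) l (𝓝 0)) :
    Tendsto f l (𝓝 (a 0)) := by
  have := (hf 0).trans_tendsto (by simpa using hl)
  simpa using this.add_const (a 0)

end HasClassicalExpansion

theorem isBigO_expansionSum_sub_expansionSum {l : Filter ℝ}
    (hl : (fun h : ℝ => h) =O[l] fun _ => (1 : ℝ)) (b : ℕ → F) {M N : ℕ} (hMN : M ≤ N) :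
    (fun h => expansionSum b N h - expansionSum b M h) =O[l] fun h => h ^ (M + 1) := by
  simp only [expansionSum, ← sum_Ico_eq_sub _ (Nat.succ_le_succ hMN)]
  refine IsBigO.fun_sum fun k hk => ?_
  have hpow := isBigO_pow_pow_of_le hl (Nat.succ_le_of_lt (mem_Ico.1 hk).1)
  simpa using hpow.smul (isBigO_const_one ℝ (b k) l)

theorem isBigO_bilinear_sub_expansionSum (L : E →L[ℝ] F →L[ℝ] G) {l : Filter ℝ}
    (hl : (fun h : ℝ => h) =O[l] fun _ => (1 : ℝ)) {f : ℝ → E} {g : ℝ → F}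
    {a : ℕ → E} {b : ℕ → F} {N : ℕ}
    (hf : (fun h => f h - expansionSum a N h) =O[l] fun h => h ^ (N + 1))
    (hg : ∀ M ≤ N, (fun h => g h - expansionSum b M h) =O[l] fun h => h ^ (M + 1)) :
    (fun h => L (f h) (g h) - expansionSum (cauchyProduct L a b) N h) =O[l]
      fun h => h ^ (N + 1) := by
  have hg_bdd : g =O[l] fun _ => (1 : ℝ) := by
    refine (((hg 0 N.zero_le).trans ?_).add (isBigO_const_one ℝ (b 0) l)).congr_left
      fun h => by simp
    simpa only [zero_add, pow_one] using hl
  have hdecomp : ∀ h, L (f h) (g h) - expansionSum (cauchyProduct L a b) N h =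
      L (f h - expansionSum a N h) (g h) +
        ∑ k ∈ range (N + 1), h ^ k • L (a k) (g h - expansionSum b (N - k) h) := by
    intro h
    rw [expansionSum_cauchyProduct]
    simp only [map_sub, smul_sub, sum_sub_distrib, sub_apply, expansionSum,
      map_sum, map_smul, FunLike.coe_sum, Finset.sum_apply, smul_apply]
    abel
  refine IsBigO.congr_left ?_ fun h => (hdecomp h).symm
  refine ((L.isBigO_comp₂ hf hg_bdd).trans ?_).add (IsBigO.fun_sum fun k hk => ?_)
  · simpa using isBigO_refl (fun h : ℝ => h ^ (N + 1)) l
  · have hr := (L (a k)).isBigO_comp _ l |>.trans (hg (N - k) (N.sub_le k))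
    have hkN : k + (N - k + 1) = N + 1 := by have := mem_range.1 hk; omega
    simpa [← pow_add, hkN] using (isBigO_refl (fun h : ℝ => h ^ k) l).smul hr

theorem HasClassicalExpansion.bilinear (L : E →L[ℝ] F →L[ℝ] G) {l : Filter ℝ}
    (hl : (fun h : ℝ => h) =O[l] fun _ => (1 : ℝ)) {f : ℝ → E} {g : ℝ → F}
    {a : ℕ → E} {b : ℕ → F} (hf : HasClassicalExpansion l f a)
    (hg : HasClassicalExpansion l g b) :
    HasClassicalExpansion l (fun h => L (f h) (g h)) (cauchyProduct L a b) :=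
  fun N => isBigO_bilinear_sub_expansionSum L hl (hf N) fun M _ => hg M

theorem cauchyProduct_mul_coeff_inv {a : ℕ → ℝ} (ha : a 0 ≠ 0) :
    cauchyProduct (ContinuousLinearMap.mul ℝ ℝ) a
      (fun n => PowerSeries.coeff n (PowerSeries.mk a)⁻¹) = Pi.single 0 1 := by
  funext n
  have hmul : PowerSeries.mk a * (PowerSeries.mk a)⁻¹ = 1 :=
    PowerSeries.mul_inv_cancel _ (by simpa using ha)
  have := congrArg (PowerSeries.coeff n) hmul
  rw [PowerSeries.coeff_mul, PowerSeries.coeff_one,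
    Finset.Nat.sum_antidiagonal_eq_sum_range_succ_mk] at this
  simpa [cauchyProduct, Pi.single_apply] using this

theorem HasClassicalExpansion.inv {l : Filter ℝ}
    (hl : (fun h : ℝ => h) =O[l] fun _ => (1 : ℝ)) {f : ℝ → ℝ} {a : ℕ → ℝ}
    (hf : HasClassicalExpansion l f a) (ha : a 0 ≠ 0) (hf_ne : (fun _ => (1 : ℝ)) =O[l] f) :
    HasClassicalExpansion l (fun h => (f h)⁻¹)
      (fun n => PowerSeries.coeff n (PowerSeries.mk a)⁻¹) := by
  set b : ℕ → ℝ := fun n => PowerSeries.coeff n (PowerSeries.mk a)⁻¹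
  have hf_inv : (fun h => (f h)⁻¹) =O[l] fun _ => (1 : ℝ) := by
    simpa using hf_ne.inv_rev (by simp)
  have hf0 : ∀ᶠ h in l, f h ≠ 0 := by
    filter_upwards [hf_ne.eq_zero_imp] with h hh h0
    exact one_ne_zero (hh h0)
  intro N
  have hprod := isBigO_bilinear_sub_expansionSum (ContinuousLinearMap.mul ℝ ℝ) hl (hf N)
    (g := expansionSum b N) fun M hM => isBigO_expansionSum_sub_expansionSum hl b hM
  rw [cauchyProduct_mul_coeff_inv ha] at hprod
  -- With `P = expansionSum b N`: `f⁻¹ - P = -f⁻¹ * (f * P - 1)` and, as `a * b = 1`,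
  -- `f * P - 1 = O(h ^ (N + 1))`.
  refine (hf_inv.mul hprod).neg_left.congr' ?_ (by simp)
  filter_upwards [hf0] with h hh
  simp only [ContinuousLinearMap.mul_apply', expansionSum_single_zero]
  field_simp
  ring

section Reflection

variable {V : Type*} [NormedAddCommGroup V] [InnerProductSpace ℝ V]

theorem reflection_orthogonalComplement_singleton_apply (w x : V) :
    (ℝ ∙ w)ᗮ.reflection x = x - (2 * ⟪x, w⟫ / ⟪w, w⟫) • w := by
  rw [Submodule.reflection_orthogonal, LinearIsometryEquiv.trans_apply,
    Submodule.reflection_apply, Submodule.starProjection_singleton, real_inner_self_eq_norm_sq,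
    real_inner_comm]
  simp [two_smul, two_mul, add_div, add_smul]

theorem HasClassicalExpansion.reflection {l : Filter ℝ}
    (hl : (fun h : ℝ => h) =O[l] fun _ => (1 : ℝ)) {w : ℝ → V} {c : ℕ → V}
    (hw : HasClassicalExpansion l w c) (hc : c 0 ≠ 0) (hw_ne : (fun _ => (1 : ℝ)) =O[l] w)
    (x : V) :
    ∃ d : ℕ → V, HasClassicalExpansion l (fun h => (ℝ ∙ w h)ᗮ.reflection x) d ∧
      d 0 = (ℝ ∙ c 0)ᗮ.reflection x := by
  let L : V →L[ℝ] V →L[ℝ] ℝ := innerSL ℝ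
  have hL : ∀ v v', L v v' = ⟪v, v'⟫ := fun _ _ => rfl
  have hww := hw.bilinear L hl hw
  have hww0 : cauchyProduct L c c 0 ≠ 0 := by
    simpa [cauchyProduct, hL] using (inner_self_ne_zero (𝕜 := ℝ)).2 hc
  have hww_ne : (fun _ => (1 : ℝ)) =O[l] fun h => ⟪w h, w h⟫ := by
    simpa [real_inner_self_eq_norm_sq, sq] using hw_ne.norm_right.mul hw_ne.norm_right
  have hxw := hw.map ((2 : ℝ) • innerSL ℝ x)
  have hcoef := hxw.bilinear (ContinuousLinearMap.mul ℝ ℝ) hl (hww.inv hl hww0 hww_ne)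
  have key := (HasClassicalExpansion.const (l := l) x).sub
    (hcoef.bilinear (ContinuousLinearMap.lsmul ℝ ℝ) hl hw)
  simp only [reflection_orthogonalComplement_singleton_apply]
  exact ⟨_, by convert key using 3; simp [hL, div_eq_mul_inv],
    by simp [cauchyProduct, hL, div_eq_mul_inv]⟩

theorem exists_orthonormalBasis_apply_zero_eq {n : ℕ} (hn : Module.finrank ℝ V = n + 1) {v : V}
    (hv : ‖v‖ = 1) : ∃ B : OrthonormalBasis (Fin (n + 1)) ℝ V, B 0 = v := by
  have : FiniteDimensional ℝ V := Module.finite_of_finrank_eq_succ hn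
  have hON : Orthonormal ℝ (({0} : Set (Fin (n + 1))).domRestrict fun _ => v) := by
    rw [orthonormal_subsingleton_iff]
    exact fun _ => hv
  obtain ⟨B, hB⟩ := hON.exists_orthonormalBasis_extension_of_card_eq (by simpa using hn)
  exact ⟨B, hB 0 rfl⟩

theorem OrthonormalBasis.exists_coe_eq_cons_reflection {n : ℕ}
    (B : OrthonormalBasis (Fin (n + 1)) ℝ V) {u : V} (hu : ‖u‖ = 1) :
    ∃ B' : OrthonormalBasis (Fin (n + 1)) ℝ V,
      ⇑B' = Fin.cons u fun j => (ℝ ∙ (B 0 + u))ᗮ.reflection (B j.succ) := by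
  set S := (ℝ ∙ (B 0 + u))ᗮ.reflection
  have hS0 : S (B 0) = -u := by
    simpa using Submodule.reflection_sub (v := B 0) (w := -u) (by simp [hu, B.orthonormal.1 0])
  have hperp : ∀ j : Fin n, S (B j.succ) ∈ (ℝ ∙ u)ᗮ := by
    intro j
    rw [Submodule.mem_orthogonal_singleton_iff_inner_right, ← neg_neg u, ← hS0, inner_neg_left,
      LinearIsometryEquiv.inner_map_map, B.orthonormal.inner_eq_zero (Fin.succ_ne_zero j).symm,
      neg_zero]
  -- Reflecting in `uᗮ` turns `S (B 0) = -u` into `u` and fixes the `S (B j.succ) ⊥ u`.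
  refine ⟨B.map (S.trans (ℝ ∙ u)ᗮ.reflection), funext fun i => Fin.cases ?_ (fun j => ?_) i⟩
  · simp [hS0, Submodule.reflection_orthogonalComplement_singleton_eq_neg]
  · simp [Submodule.reflection_mem_subspace_eq_self (hperp j)]

end Reflection

theorem hasClassicalExpansion_principal_Ioc_iff {h₁ : ℝ} {f : ℝ → F} {a : ℕ → F} :
    HasClassicalExpansion (𝓟 (Set.Ioc 0 h₁)) f a ↔
      ∀ N : ℕ, ∃ C > 0, ∀ h ∈ Set.Ioc (0 : ℝ) h₁,
        ‖f h - ∑ k ∈ range (N + 1), h ^ k • a k‖ ≤ C * h ^ (N + 1) := by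
  refine forall_congr' fun N => ?_
  rw [isBigO_principal]
  constructor
  · rintro ⟨c, hc⟩
    refine ⟨max c 1, by positivity, fun h hh => ?_⟩
    have hpow : 0 ≤ h ^ (N + 1) := pow_nonneg hh.1.le _
    calc _ ≤ c * ‖h ^ (N + 1)‖ := hc h hh
      _ ≤ max c 1 * h ^ (N + 1) := by
        rw [Real.norm_of_nonneg hpow]
        exact mul_le_mul_of_nonneg_right (le_max_left _ _) hpow
  · rintro ⟨C, -, hC⟩
    exact ⟨C, fun h hh => by simpa [abs_of_pos hh.1, expansionSum] using hC h hh⟩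

theorem isBigO_id_one_principal_Ioc (h₁ : ℝ) :
    (fun h : ℝ => h) =O[𝓟 (Set.Ioc 0 h₁)] fun _ => (1 : ℝ) :=
  isBigO_principal.2 ⟨h₁, fun h hh => by simpa [abs_of_pos hh.1] using hh.2⟩

theorem HasClassicalExpansion.tendsto_nhdsGT {h₀ : ℝ} {f : ℝ → F} {a : ℕ → F}
    (hf : HasClassicalExpansion (𝓟 (Set.Ioc 0 h₀)) f a) (hh₀ : 0 < h₀) :
    Tendsto f (𝓝[>] 0) (𝓝 (a 0)) :=
  (hf.mono (le_principal_iff.2 (Ioc_mem_nhdsGT hh₀))).tendsto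
    (tendsto_nhdsWithin_of_tendsto_nhds tendsto_id)

theorem one_le_norm_add_of_dist_lt {v u : F} (hv : ‖v‖ = 1) (hu : dist u v < 1) :
    1 ≤ ‖v + u‖ := by
  have hvv : ‖v + v‖ = 2 := by rw [← two_smul ℝ, norm_smul, hv]; norm_num
  calc (1 : ℝ) ≤ ‖v + v‖ - ‖v - u‖ := by rw [hvv, ← dist_eq_norm, dist_comm]; linarith
    _ ≤ ‖v + v - (v - u)‖ := norm_sub_norm_le _ _
    _ = ‖v + u‖ := by congr 1; abel

/-- **Completion of a classical family of unit vectors to an orthonormal basis with classical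
expansions.**  Let `θ₀(h) ∈ ℝ^{q+1}`, `h ∈ (0, h₀]`, be unit vectors admitting a classical
expansion `θ₀(h) ∼ Σ hᵏ θ₀⁽ᵏ⁾`.  Then, shrinking `h₀` to some `h₁`, there are families
`θ₁(h), …, θ_q(h)`, each with a classical expansion, such that for every `h ∈ (0, h₁]` the
family `(θ₀(h), θ₁(h), …, θ_q(h))` is an orthonormal basis of `ℝ^{q+1}`, and the leading terms
`θⱼ⁽⁰⁾` (`1 ≤ j ≤ q`) are orthogonal to `θ₀⁽⁰⁾`. -/
theorem orthonormal_completion_with_classical_expansion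
    (q : ℕ) (h₀ : ℝ) (hh₀ : 0 < h₀)
    (θ0 : ℝ → EuclideanSpace ℝ (Fin (q + 1)))
    (θ0k : ℕ → EuclideanSpace ℝ (Fin (q + 1)))
    (hunit : ∀ h ∈ Set.Ioc (0 : ℝ) h₀, ‖θ0 h‖ = 1)
    (hexp : ∀ N : ℕ, ∃ C > 0, ∀ h ∈ Set.Ioc (0 : ℝ) h₀,
      ‖θ0 h - ∑ k ∈ Finset.range (N + 1), h ^ k • θ0k k‖ ≤ C * h ^ (N + 1)) :
    ∃ h₁, 0 < h₁ ∧ h₁ ≤ h₀ ∧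
      ∃ (θ : Fin q → ℝ → EuclideanSpace ℝ (Fin (q + 1)))
        (θk : Fin q → ℕ → EuclideanSpace ℝ (Fin (q + 1))),
        (∀ j : Fin q, ∀ N : ℕ, ∃ C > 0, ∀ h ∈ Set.Ioc (0 : ℝ) h₁,
          ‖θ j h - ∑ k ∈ Finset.range (N + 1), h ^ k • θk j k‖ ≤ C * h ^ (N + 1)) ∧
        (∀ h ∈ Set.Ioc (0 : ℝ) h₁,
          Orthonormal ℝ (Fin.cons (θ0 h) (fun j => θ j h) : Fin (q + 1) → _) ∧
          Submodule.span ℝ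
            (Set.range (Fin.cons (θ0 h) (fun j => θ j h) : Fin (q + 1) → _)) = ⊤) ∧
        (∀ j : Fin q, ⟪θk j 0, θ0k 0⟫ = 0) := by
  have hθ0 := hasClassicalExpansion_principal_Ioc_iff.2 hexp
  have hlim := hθ0.tendsto_nhdsGT hh₀
  have hv₀ : ‖θ0k 0‖ = 1 := tendsto_nhds_unique hlim.norm <| tendsto_const_nhds.congr' <|
    eventually_of_mem (Ioc_mem_nhdsGT hh₀) fun h hh => (hunit h hh).symm
  obtain ⟨δ, hδ, hclose⟩ :=
    mem_nhdsGT_iff_exists_Ioc_subset.1 (hlim (Metric.ball_mem_nhds _ one_pos))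
  set h₁ := min h₀ δ
  have hsub : Set.Ioc 0 h₁ ⊆ Set.Ioc 0 h₀ := Set.Ioc_subset_Ioc_right (min_le_left _ _)
  have hw := (HasClassicalExpansion.const (θ0k 0)).add (hθ0.mono (principal_mono.2 hsub))
  have hw_ne : (fun _ => (1 : ℝ)) =O[𝓟 (Set.Ioc 0 h₁)] fun h => θ0k 0 + θ0 h := by
    refine isBigO_principal.2 ⟨1, fun h hh => ?_⟩
    simpa using one_le_norm_add_of_dist_lt hv₀
      (hclose (Set.Ioc_subset_Ioc_right (min_le_right _ _) hh))
  have hc : θ0k 0 + θ0k 0 ≠ 0 :=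
    norm_pos_iff.1 (one_pos.trans_le (one_le_norm_add_of_dist_lt hv₀ (by simp)))
  obtain ⟨B, hB⟩ := exists_orthonormalBasis_apply_zero_eq finrank_euclideanSpace_fin hv₀
  choose θk hθk hθk0 using fun j : Fin q =>
    hw.reflection (isBigO_id_one_principal_Ioc h₁) (by simpa using hc) hw_ne (B j.succ)
  refine ⟨h₁, lt_min hh₀ hδ, min_le_left _ _,
    fun j h => (ℝ ∙ (θ0k 0 + θ0 h))ᗮ.reflection (B j.succ), θk,
    fun j => hasClassicalExpansion_principal_Ioc_iff.1 (hθk j), fun h hh => ?_, fun j => ?_⟩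
  · obtain ⟨B', hB'⟩ := B.exists_coe_eq_cons_reflection (hunit h (hsub hh))
    rw [hB] at hB'
    rw [← hB']
    exact ⟨B'.orthonormal, by simpa using B'.toBasis.span_eq⟩
  · have hj : ⟪B 0, B j.succ⟫ = 0 := B.orthonormal.inner_eq_zero (Fin.succ_ne_zero j).symm
    rw [hθk0 j, Submodule.reflection_mem_subspace_eq_self, ← hB, real_inner_comm, hj]
    rw [Submodule.mem_orthogonal_singleton_iff_inner_right, Pi.single_eq_same, ← hB,
      inner_add_left, hj, add_zero]
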